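/- arXiv:0901.2392 — 8 statements merged into one kernel-verified Lean document; each statement's English description precedes it below -/
import Mathlib

section
/- Let R be a Noetherian ring, I ⊆ R an ideal, and S a module-finite R-algebra. If every finite system of polynomial equations over R has the strong approximation property with respect to (R,I), then every finite system of polynomial equations over S has the strong approximation property with respect to (S,IS). -/
/-!
Choose generators `s₁, …, sₘ` of `S` as an `R`-module and write every unknown over `S` as
`∑ₖ yₖ sₖ` with unknowns `yₖ` over `R`. Then `gᵢ(∑ₖ y₍ⱼ,ₖ₎ sₖ) = ∑ₖ Pᵢₖ(y) sₖ` for polynomials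
`Pᵢₖ` over `R`, and `gᵢ = 0` means that the vector `(Pᵢₖ(y))ₖ` lies in the kernel of
`Rᵐ → S`, which is generated by finitely many vectors `w_u` because `R` is Noetherian. Adding
unknowns `tᵢᵤ` for the coefficients, the system `Pᵢₖ(y) = ∑ᵤ tᵢᵤ w_{u,k}` over `R` is equivalent
to `g = 0`. An approximate solution of `g` modulo `(IS)^c = I^c S` lifts to one of this system
modulo `I^c`; an Artin bound over `R` corrects it to an exact solution, whose image in `S` is an
exact solution of `g` close to the original one.
-/

open MvPolynomial

/-- `β` is an Artin bound for the system `f` with respect to `(R, I)`: every approximate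
solution modulo `I ^ β n` is congruent modulo `I ^ n` to an exact solution. -/
def IsArtinBound {R : Type*} [CommRing R] (I : Ideal R) {N r : ℕ}
    (f : Fin r → MvPolynomial (Fin N) R) (β : ℕ → ℕ) : Prop :=
  ∀ n : ℕ, ∀ a : Fin N → R, (∀ i, eval a (f i) ∈ I ^ β n) →
    ∃ b : Fin N → R, (∀ i, eval b (f i) = 0) ∧ ∀ j, a j - b j ∈ I ^ n

/-- `IsArtinBound` for arbitrary index types; for `Fin N` and `Fin r` the two are
definitionally equal. -/
def IsArtinBound' {R : Type*} [CommRing R] (I : Ideal R) {σ ι : Type*}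
    (f : ι → MvPolynomial σ R) (β : ℕ → ℕ) : Prop :=
  ∀ n : ℕ, ∀ a : σ → R, (∀ i, eval a (f i) ∈ I ^ β n) →
    ∃ b : σ → R, (∀ i, eval b (f i) = 0) ∧ ∀ j, a j - b j ∈ I ^ n

section Reindex

variable {R : Type*} [CommRing R] (I : Ideal R)

theorem IsArtinBound'.of_rename {σ σ' ι ι' : Type*} (e : σ ≃ σ') (eι : ι' ≃ ι)
    {f : ι → MvPolynomial σ R} {β : ℕ → ℕ}
    (h : IsArtinBound' I (fun i => rename e (f (eι i))) β) : IsArtinBound' I f β := by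
  intro n a ha
  obtain ⟨b, hb0, hbn⟩ := h n (a ∘ e.symm) fun i => by
    simpa [eval_rename, Function.comp_def] using ha (eι i)
  refine ⟨b ∘ e, fun i => ?_, fun j => by simpa using hbn (e j)⟩
  simpa [eval_rename] using hb0 (eι.symm i)

theorem exists_isArtinBound'
    (hR : ∀ (N r : ℕ) (f : Fin r → MvPolynomial (Fin N) R), ∃ β : ℕ → ℕ, IsArtinBound I f β)
    {σ ι : Type*} [Finite σ] [Finite ι] (f : ι → MvPolynomial σ R) :
    ∃ β : ℕ → ℕ, IsArtinBound' I f β := by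
  obtain ⟨N, ⟨e⟩⟩ := Finite.exists_equiv_fin σ
  obtain ⟨r, ⟨eι⟩⟩ := Finite.exists_equiv_fin ι
  obtain ⟨β, hβ⟩ := hR N r fun i => rename e (f (eι.symm i))
  exact ⟨β, IsArtinBound'.of_rename I e eι.symm hβ⟩

end Reindex

section Coordinates

variable {R S : Type*} [CommRing R] [CommRing S] [Algebra R S] {ι : Type*} [Fintype ι]
  {s : ι → S}

theorem exists_linearCombination_mul_linearCombination
    (hs : Function.Surjective (Fintype.linearCombination R s)) :
    ∃ c : ι → ι → ι → R, ∀ u v : ι → R,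
      Fintype.linearCombination R s u * Fintype.linearCombination R s v =
        Fintype.linearCombination R s (∑ k, ∑ l, (u k * v l) • c k l) := by
  choose c hc using fun k l => hs (s k * s l)
  refine ⟨c, fun u v => ?_⟩
  simp only [map_sum, map_smul, hc, Fintype.linearCombination_apply, Finset.sum_mul_sum,
    smul_mul_smul_comm]

theorem exists_eval_linearCombination_eq
    (hs : Function.Surjective (Fintype.linearCombination R s)) {σ : Type*}
    (q : MvPolynomial σ S) :
    ∃ P : ι → MvPolynomial (σ × ι) R, ∀ y : σ × ι → R,
      eval (fun j => Fintype.linearCombination R s fun k => y (j, k)) q =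
        Fintype.linearCombination R s fun k => eval y (P k) := by
  obtain ⟨c, hc⟩ := exists_linearCombination_mul_linearCombination hs
  induction q using MvPolynomial.induction_on with
  | C x =>
    obtain ⟨z, rfl⟩ := hs x
    exact ⟨fun k => C (z k), fun y => by simp⟩
  | add p q hp hq =>
    obtain ⟨P, hP⟩ := hp
    obtain ⟨Q, hQ⟩ := hq
    refine ⟨P + Q, fun y => ?_⟩
    rw [eval_add, hP, hQ, ← map_add]
    congr 1
    ext k
    simp
  | mul_X p j hp =>
    obtain ⟨P, hP⟩ := hp
    refine ⟨fun l => ∑ k, ∑ k', P k * X (j, k') * C (c k k' l), fun y => ?_⟩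
    rw [eval_mul, hP, eval_X, hc]
    congr 1
    ext l
    simp [Finset.sum_apply, mul_assoc]

theorem mem_map_algebraMap_iff_exists_linearCombination
    (hs : Function.Surjective (Fintype.linearCombination R s)) (J : Ideal R) (x : S) :
    x ∈ J.map (algebraMap R S) ↔
      ∃ z : ι → R, (∀ k, z k ∈ J) ∧ Fintype.linearCombination R s z = x := by
  have hspan : Submodule.span R (Set.range s) = ⊤ := by
    rwa [span_range_eq_top_iff_surjective_fintypeLinearCombination]
  have hmem : x ∈ J.map (algebraMap R S) ↔ x ∈ J • Submodule.span R (Set.range s) := by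
    rw [hspan, Ideal.smul_top_eq_map]
    rfl
  rw [hmem, Submodule.mem_ideal_smul_span_iff_exists_sum]
  constructor
  · rintro ⟨a, ha, rfl⟩
    exact ⟨a, ha, by simp [Fintype.linearCombination_apply, Finsupp.sum_fintype]⟩
  · rintro ⟨z, hz, rfl⟩
    exact ⟨Finsupp.equivFunOnFinite.symm z, hz, by
      simp [Fintype.linearCombination_apply, Finsupp.sum_fintype]⟩

end Coordinates

section LiftedSystem

variable {R S : Type*} [CommRing R] [CommRing S] [Algebra R S]
  {σ τ ι κ : Type*} [Fintype κ]

noncomputable def liftedSystem (P : τ → ι → MvPolynomial (σ × ι) R) (w : κ → ι → R) :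
    τ × ι → MvPolynomial ((σ × ι) ⊕ (τ × κ)) R :=
  fun ik => rename Sum.inl (P ik.1 ik.2) - ∑ u, C (w u ik.2) * X (Sum.inr (ik.1, u))

theorem liftedSystem_eval (P : τ → ι → MvPolynomial (σ × ι) R) (w : κ → ι → R)
    (α : (σ × ι) ⊕ (τ × κ) → R) (i : τ) :
    (fun k => eval α (liftedSystem P w (i, k))) =
      (fun k => eval (α ∘ Sum.inl) (P i k)) - ∑ u, α (Sum.inr (i, u)) • w u := by
  ext k
  simp [liftedSystem, eval_rename, Finset.sum_apply, mul_comm]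

variable [Fintype ι] {s : ι → S} {g : τ → MvPolynomial σ S}
  {P : τ → ι → MvPolynomial (σ × ι) R} {w : κ → ι → R}

theorem exists_eval_liftedSystem_mem
    (hs : Function.Surjective (Fintype.linearCombination R s))
    (hw : LinearMap.ker (Fintype.linearCombination R s) ≤ Submodule.span R (Set.range w))
    (hP : ∀ i y, eval (fun j => Fintype.linearCombination R s fun k => y (j, k)) (g i) =
      Fintype.linearCombination R s fun k => eval y (P i k))
    (J : Ideal R) {a : σ → S} (ha : ∀ i, eval a (g i) ∈ J.map (algebraMap R S)) :
    ∃ α : (σ × ι) ⊕ (τ × κ) → R, (∀ ik, eval α (liftedSystem P w ik) ∈ J) ∧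
      ∀ j, Fintype.linearCombination R s (fun k => α (Sum.inl (j, k))) = a j := by
  choose y hy using fun j => hs (a j)
  choose z hzJ hz using fun i =>
    (mem_map_algebraMap_iff_exists_linearCombination hs J _).1 (ha i)
  have hker : ∀ i, (fun k => eval (fun jk => y jk.1 jk.2) (P i k)) - z i ∈
      Submodule.span R (Set.range w) := fun i => hw <| by
    rw [LinearMap.mem_ker, map_sub, ← hP, hz i, sub_eq_zero]
    exact congrArg (eval · (g i)) (funext hy)
  choose t ht using fun i => (Submodule.mem_span_range_iff_exists_fun R).1 (hker i)
  refine ⟨Sum.elim (fun jk => y jk.1 jk.2) fun iu => t iu.1 iu.2, fun ⟨i, k⟩ => ?_, hy⟩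
  have hcoord := congrFun (liftedSystem_eval P w
    (Sum.elim (fun jk => y jk.1 jk.2) fun iu => t iu.1 iu.2) i) k
  simp only [Sum.elim_comp_inl, Sum.elim_inr, ht i, Pi.sub_apply, sub_sub_cancel] at hcoord
  exact hcoord ▸ hzJ i k

theorem eval_eq_zero_of_eval_liftedSystem_eq_zero
    (hw : Submodule.span R (Set.range w) ≤ LinearMap.ker (Fintype.linearCombination R s))
    (hP : ∀ i y, eval (fun j => Fintype.linearCombination R s fun k => y (j, k)) (g i) =
      Fintype.linearCombination R s fun k => eval y (P i k))
    {α : (σ × ι) ⊕ (τ × κ) → R} (h0 : ∀ ik, eval α (liftedSystem P w ik) = 0) (i : τ) :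
    eval (fun j => Fintype.linearCombination R s fun k => α (Sum.inl (j, k))) (g i) = 0 := by
  have hsol : (fun k => eval (α ∘ Sum.inl) (P i k)) = ∑ u, α (Sum.inr (i, u)) • w u := by
    rw [← sub_eq_zero, ← liftedSystem_eval]
    exact funext fun k => h0 (i, k)
  refine (hP i (α ∘ Sum.inl)).trans ?_
  rw [hsol]
  exact hw <| Submodule.sum_mem _ fun u _ =>
    Submodule.smul_mem _ _ (Submodule.subset_span ⟨u, rfl⟩)

theorem IsArtinBound'.of_liftedSystem (I : Ideal R)
    (hs : Function.Surjective (Fintype.linearCombination R s))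
    (hw : Submodule.span R (Set.range w) = LinearMap.ker (Fintype.linearCombination R s))
    (hP : ∀ i y, eval (fun j => Fintype.linearCombination R s fun k => y (j, k)) (g i) =
      Fintype.linearCombination R s fun k => eval y (P i k))
    {β : ℕ → ℕ} (h : IsArtinBound' I (liftedSystem P w) β) :
    IsArtinBound' (I.map (algebraMap R S)) g β := by
  intro n a ha
  obtain ⟨α, happrox, hα⟩ :=
    exists_eval_liftedSystem_mem hs hw.ge hP (I ^ β n) (by simpa [Ideal.map_pow] using ha)
  obtain ⟨α', h0, hclose⟩ := h n α happrox
  refine ⟨_, eval_eq_zero_of_eval_liftedSystem_eq_zero hw.le hP h0, fun j => ?_⟩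
  rw [← hα j, ← map_sub, ← Ideal.map_pow]
  exact (mem_map_algebraMap_iff_exists_linearCombination hs _ _).2
    ⟨_, fun k => hclose (Sum.inl (j, k)), rfl⟩

end LiftedSystem

/-- **Lemma (SAP ascends along module-finite extensions).** Let `R` be Noetherian, `I ⊆ R` an
ideal and `S` a module-finite `R`-algebra.  If every finite system of polynomial equations over
`R` admits an Artin bound with respect to `(R, I)`, then every finite system of polynomial
equations over `S` admits an Artin bound with respect to `(S, IS)`. -/
theorem sap_of_moduleFinite
    (R : Type*) [CommRing R] [IsNoetherianRing R] (I : Ideal R)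
    (S : Type*) [CommRing S] [Algebra R S] [Module.Finite R S]
    (hR : ∀ (N r : ℕ) (f : Fin r → MvPolynomial (Fin N) R), ∃ β : ℕ → ℕ, IsArtinBound I f β) :
    ∀ (N r : ℕ) (g : Fin r → MvPolynomial (Fin N) S),
      ∃ β : ℕ → ℕ, IsArtinBound (I.map (algebraMap R S)) g β := by
  intro N r g
  obtain ⟨m, s, hspan⟩ := Module.Finite.exists_fin (R := R) (M := S)
  have hs := (span_range_eq_top_iff_surjective_fintypeLinearCombination R s).1 hspan
  choose P hP using fun i => exists_eval_linearCombination_eq hs (g i)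
  obtain ⟨p, w, hw⟩ := Submodule.fg_iff_exists_fin_generating_family.1
    (IsNoetherian.noetherian (LinearMap.ker (Fintype.linearCombination R s)))
  obtain ⟨β, hβ⟩ := exists_isArtinBound' I hR (liftedSystem P w)
  exact ⟨β, IsArtinBound'.of_liftedSystem I hs hw hP hβ⟩
end

section
/- Let (R,m) be a Noetherian local ring with m-adic completion R̂, and let f = (f₁,…,f_r) be a system of polynomials in R[X₁,…,X_N]. Suppose f has the Artin approximation property over R: for each c ∈ ℕ and each â ∈ R̂^N with fᵢ(â) = 0 for all i, there exists a ∈ R^N with fᵢ(a) = 0 for all i and a ≡ â (mod m^c R̂^N). If β : ℕ → ℕ is an Artin bound for f viewed as a system over (R̂, mR̂), then β is also an Artin bound for f over (R,m). In particular, if f has SAP (respectively LAP) over R̂, then f has SAP (respectively LAP) over R. -/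
open MvPolynomial IsLocalRing

/-! An approximate solution `a` over `R` is also one over `R̂`, so the Artin bound over `R̂` gives an
exact solution `b̂` close to `a`; the approximation property replaces `b̂` by an exact solution `b`
over `R` close to `b̂`. Then `a - b` lies in `(m R̂)ⁿ`, whose contraction to `R` is `mⁿ`, because
`mⁿ` is the kernel of `R → R̂ → R ⧸ mⁿ`. -/

theorem AdicCompletion.comap_algebraMap_map_pow {R : Type*} [CommRing R] (I : Ideal R) (n : ℕ) :
    ((I.map (algebraMap R (AdicCompletion I R))) ^ n).comap (algebraMap R (AdicCompletion I R))
      = I ^ n := by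
  have hker : RingHom.ker ((evalₐ I n : AdicCompletion I R →+* R ⧸ I ^ n).comp
      (algebraMap R (AdicCompletion I R))) = I ^ n := by
    rw [(evalₐ I n).comp_algebraMap, Ideal.Quotient.algebraMap_eq, Ideal.mk_ker]
  rw [← Ideal.map_pow]
  refine le_antisymm ?_ Ideal.le_comap_map
  rw [← hker, ← RingHom.comap_ker]
  exact Ideal.comap_mono (Ideal.map_le_iff_le_comap.mpr (by rw [RingHom.comap_ker, hker]))

theorem IsArtinBound.of_map {R S : Type*} [CommRing R] [CommRing S] (φ : R →+* S) (I : Ideal R)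
    {N r : ℕ} (f : Fin r → MvPolynomial (Fin N) R) (β : ℕ → ℕ)
    (hcomap : ∀ n, ((I.map φ) ^ n).comap φ ≤ I ^ n)
    (hAP : ∀ c : ℕ, ∀ ahat : Fin N → S, (∀ i, eval ahat ((f i).map φ) = 0) →
      ∃ a : Fin N → R, (∀ i, eval a (f i) = 0) ∧ ∀ j, φ (a j) - ahat j ∈ (I.map φ) ^ c)
    (hβ : IsArtinBound (I.map φ) (fun i => (f i).map φ) β) :
    IsArtinBound I f β := by
  intro n a ha
  have ha' : ∀ i, eval (φ ∘ a) ((f i).map φ) ∈ (I.map φ) ^ β n := fun i => by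
    rw [eval_map, ← eval₂_comp, ← Ideal.map_pow]
    exact Ideal.mem_map_of_mem φ (ha i)
  obtain ⟨bhat, hbhat, hbhat_near⟩ := hβ n (φ ∘ a) ha'
  obtain ⟨b, hb, hb_near⟩ := hAP n bhat hbhat
  refine ⟨b, hb, fun j => hcomap n ?_⟩
  rw [Ideal.mem_comap, map_sub, ← sub_sub_sub_cancel_right _ _ (bhat j)]
  exact Ideal.sub_mem _ (hbhat_near j) (hb_near j)

theorem isArtinBound_of_isArtinBound_adicCompletion_general
    (R : Type*) [CommRing R] [IsLocalRing R]
    (N r : ℕ) (f : Fin r → MvPolynomial (Fin N) R)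
    (hAP : ∀ c : ℕ, ∀ ahat : Fin N → AdicCompletion (maximalIdeal R) R,
      (∀ i, eval ahat ((f i).map (algebraMap R (AdicCompletion (maximalIdeal R) R))) = 0) →
      ∃ a : Fin N → R, (∀ i, eval a (f i) = 0) ∧
        ∀ j, algebraMap R (AdicCompletion (maximalIdeal R) R) (a j) - ahat j ∈
          ((maximalIdeal R).map (algebraMap R (AdicCompletion (maximalIdeal R) R))) ^ c)
    (β : ℕ → ℕ)
    (hβ : IsArtinBound ((maximalIdeal R).map (algebraMap R (AdicCompletion (maximalIdeal R) R)))
      (fun i => (f i).map (algebraMap R (AdicCompletion (maximalIdeal R) R))) β) :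
    IsArtinBound (maximalIdeal R) f β :=
  IsArtinBound.of_map _ _ f β
    (fun n => (AdicCompletion.comap_algebraMap_map_pow _ n).le) hAP hβ

/-- **Lemma.** Let `(R, m)` be a Noetherian local ring with `m`-adic completion `R̂` and let
`f = (f₁,…,f_r) ⊆ R[X₁,…,X_N]` be a system with the Artin approximation property over `R`
(every exact solution over `R̂` is approximated arbitrarily well by exact solutions over `R`).
If `β` is an Artin bound for `f` viewed over `(R̂, m R̂)`, then `β` is an Artin bound for `f`
over `(R, m)`. -/
theorem isArtinBound_of_isArtinBound_adicCompletion
    (R : Type*) [CommRing R] [IsNoetherianRing R] [IsLocalRing R]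
    (N r : ℕ) (f : Fin r → MvPolynomial (Fin N) R)
    (hAP : ∀ c : ℕ, ∀ ahat : Fin N → AdicCompletion (maximalIdeal R) R,
      (∀ i, eval ahat ((f i).map (algebraMap R (AdicCompletion (maximalIdeal R) R))) = 0) →
      ∃ a : Fin N → R, (∀ i, eval a (f i) = 0) ∧
        ∀ j, algebraMap R (AdicCompletion (maximalIdeal R) R) (a j) - ahat j ∈
          ((maximalIdeal R).map (algebraMap R (AdicCompletion (maximalIdeal R) R))) ^ c)
    (β : ℕ → ℕ)
    (hβ : IsArtinBound ((maximalIdeal R).map (algebraMap R (AdicCompletion (maximalIdeal R) R)))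
      (fun i => (f i).map (algebraMap R (AdicCompletion (maximalIdeal R) R))) β) :
    IsArtinBound (maximalIdeal R) f β :=
  isArtinBound_of_isArtinBound_adicCompletion_general R N r f hAP β hβ
end

section
/- Let R be a Noetherian ring, X = (X₁,…,X_N) variables, and f = (f₁,…,f_r) ⊆ R[X]. Suppose the ideal H_{f/R} of R[X] is generated by g₁,…,g_M. Let Y = (Y₁,…,Y_M) and Z = (Z₁,…,Z_T) be new variables, let h ∈ R[X,Z], and set G = h + Y₁g₁ + … + Y_M g_M ∈ R[X,Y,Z]. Then H_{(f₁,…,f_r,G)/R} ⊇ (H_{f/R})² R[X,Y,Z]. -/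
/-! Let `δ a` be a generator of `H_{f/R}`, with `δ` a `p × p` minor of the Jacobian of
`f_{i₁}, …, f_{i_p}` and `a` in the corresponding colon ideal. Border the minor by the row of `G`
and the column of `Y_j`: since no `f_i` involves `Y_j` and `∂G/∂Y_j = g_j`, the last column is
`(0, …, 0, g_j)`, so the bordered minor is `g_j δ`. Adjoining `G` to both ideals of a colon ideal
only enlarges it, so `a` stays in the colon ideal of `(i₁, …, i_p, r + 1)`, and `g_j δ a` lies in
`H_{(f, G)/R}`. Hence `g_j H_{f/R} ⊆ H_{(f, G)/R}` for every `j`, and since the `g_j` generate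
`H_{f/R}`, `H_{f/R}² ⊆ H_{(f, G)/R}`. -/

open MvPolynomial

/-- Elkik's ideal `H_{f/R}`: the sum over `1 ≤ i₁ < ⋯ < i_p ≤ r` of
`Δ(i₁,…,i_p) · ((f_{i₁},…,f_{i_p}) : (f₁,…,f_r))`, where `Δ(i₁,…,i_p)` is generated by the
`p × p` minors of the Jacobian matrix `(∂f_{i_j}/∂X_k)`. -/
noncomputable def elkikH {R : Type*} [CommRing R] {σ : Type*} [DecidableEq σ] {r : ℕ}
    (f : Fin r → MvPolynomial σ R) : Ideal (MvPolynomial σ R) :=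
  ⨆ (p : ℕ) (_ : 0 < p) (rows : Fin p → Fin r) (_ : StrictMono rows),
    Ideal.span {d | ∃ cols : Fin p → σ,
        d = (Matrix.of fun j k : Fin p => pderiv (cols k) (f (rows j))).det} *
      (Ideal.span (Set.range (f ∘ rows))).colon (Ideal.span (Set.range f))

theorem Fin.strictMono_snoc_castSucc_comp_last {p r : ℕ} {rows : Fin p → Fin r}
    (h : StrictMono rows) :
    StrictMono (Fin.snoc (Fin.castSucc ∘ rows) (Fin.last r) : Fin (p + 1) → Fin (r + 1)) := by
  rw [← Fin.insertNth_last', Fin.strictMono_insertNth_iff]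
  exact ⟨Fin.strictMono_castSucc.comp h, fun i _ => Fin.castSucc_lt_last _,
    fun i hi => absurd hi (Fin.castSucc_lt_last i).not_ge⟩

theorem Matrix.det_eq_mul_det_of_castSucc_last_eq_zero {R : Type*} [CommRing R] {n : ℕ}
    (A : Matrix (Fin (n + 1)) (Fin (n + 1)) R) (hA : ∀ i : Fin n, A i.castSucc (Fin.last n) = 0) :
    A.det = A (Fin.last n) (Fin.last n) * (A.submatrix Fin.castSucc Fin.castSucc).det := by
  rw [det_succ_column A (Fin.last n), Fin.sum_univ_castSucc]
  simp [hA, Fin.succAbove_last, ← two_mul, pow_mul]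

theorem Ideal.map_colon_le {A B F : Type*} [CommRing A] [CommRing B] [FunLike F A B]
    [RingHomClass F A B] (φ : F) (I J : Ideal A) :
    Ideal.map φ (I.colon J) ≤ (Ideal.map φ I).colon (Ideal.map φ J) := by
  refine Ideal.map_le_iff_le_comap.2 fun a ha => ?_
  rw [Submodule.mem_colon_iff_le, ← Submodule.ideal_span_singleton_smul] at ha
  rw [Ideal.mem_comap, Submodule.mem_colon_iff_le, ← Submodule.ideal_span_singleton_smul]
  simpa [Ideal.map_mul, Ideal.map_span] using Ideal.map_mono (f := φ) ha

theorem Ideal.colon_le_colon_sup {A : Type*} [CommRing A] (I J K : Ideal A) :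
    I.colon J ≤ (I ⊔ K).colon (↑(J ⊔ K) : Set A) := by
  intro a ha
  rw [Submodule.mem_colon_iff_le, Submodule.smul_sup']
  exact sup_le_sup (Submodule.mem_colon_iff_le.1 ha) (Submodule.smul_le_self_of_tower a K)

theorem MvPolynomial.pderiv_rename_of_notMem_range {R σ τ : Type*} [CommSemiring R]
    [DecidableEq τ] {u : σ → τ} {i : τ} (hi : i ∉ Set.range u) (q : MvPolynomial σ R) :
    pderiv i (rename u q) = 0 := by
  refine pderiv_eq_zero_of_notMem_vars fun hmem => ?_
  obtain ⟨x, -, hx⟩ := mem_vars_rename u q hmem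
  exact hi ⟨x, hx⟩

theorem MvPolynomial.pderiv_sum_X_mul {R σ ι : Type*} [CommSemiring R] [DecidableEq σ]
    [Fintype ι] {e : ι → σ} (he : Function.Injective e) {q : ι → MvPolynomial σ R}
    (hq : ∀ j k, pderiv (e j) (q k) = 0) (j : ι) :
    pderiv (e j) (∑ k, X (e k) * q k) = q j := by
  classical
  simp [pderiv_X, hq, Pi.single_apply, he.eq_iff]

theorem map_mem_colon_snoc {A B F : Type*} [CommRing A] [CommRing B] [FunLike F A B]
    [RingHomClass F A B] (φ : F) {r p : ℕ}
    (f : Fin r → A) (G : B) (rows : Fin p → Fin r) {a : A}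
    (ha : a ∈ (Ideal.span (Set.range (f ∘ rows))).colon (Ideal.span (Set.range f))) :
    φ a ∈ (Ideal.span (Set.range (Fin.snoc (fun i => φ (f i)) G ∘
        Fin.snoc (Fin.castSucc ∘ rows) (Fin.last r)))).colon
      (Ideal.span (Set.range (Fin.snoc (fun i => φ (f i)) G))) := by
  have hspan {n : ℕ} (v : Fin n → A) :
      Ideal.span (Set.range (Fin.snoc (fun i => φ (v i)) G)) =
        Ideal.map φ (Ideal.span (Set.range v)) ⊔ Ideal.span {G} := by
    rw [Fin.range_snoc, Ideal.span_insert, sup_comm, Ideal.map_span, ← Set.range_comp]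
    rfl
  have hrows : Fin.snoc (fun i => φ (f i)) G ∘ Fin.snoc (Fin.castSucc ∘ rows) (Fin.last r) =
      Fin.snoc (fun i => φ ((f ∘ rows) i)) G := by
    rw [Fin.comp_snoc]
    simp [Function.comp_def]
  rw [hrows, hspan, hspan]
  exact Ideal.colon_le_colon_sup _ _ _ (Ideal.map_colon_le φ _ _ (Ideal.mem_map_of_mem φ ha))

section ElkikIdeal

variable {R : Type*} [CommRing R] {σ τ : Type*} {r : ℕ}

theorem det_mul_mem_elkikH [DecidableEq σ] (f : Fin r → MvPolynomial σ R) {p : ℕ} (hp : 0 < p)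
    {rows : Fin p → Fin r} (hrows : StrictMono rows) (cols : Fin p → σ) {a : MvPolynomial σ R}
    (ha : a ∈ (Ideal.span (Set.range (f ∘ rows))).colon (Ideal.span (Set.range f))) :
    (Matrix.of fun j k : Fin p => pderiv (cols k) (f (rows j))).det * a ∈ elkikH f :=
  (le_iSup₂_of_le p hp <| le_iSup₂_of_le rows hrows le_rfl : _ ≤ elkikH f)
    (Ideal.mul_mem_mul (Ideal.subset_span ⟨cols, rfl⟩) ha)

theorem det_pderiv_snoc [DecidableEq τ] {u : σ → τ} (hu : Function.Injective u) {y : τ}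
    (hy : y ∉ Set.range u) (f : Fin r → MvPolynomial σ R) (G : MvPolynomial τ R) {p : ℕ}
    (rows : Fin p → Fin r) (cols : Fin p → σ) :
    (Matrix.of fun j k : Fin (p + 1) => pderiv ((Fin.snoc (u ∘ cols) y : Fin (p + 1) → τ) k)
        ((Fin.snoc (fun i => rename u (f i)) G : Fin (r + 1) → MvPolynomial τ R)
          ((Fin.snoc (Fin.castSucc ∘ rows) (Fin.last r) : Fin (p + 1) → Fin (r + 1)) j))).det =
      pderiv y G * rename u (Matrix.of fun j k : Fin p => pderiv (cols k) (f (rows j))).det := by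
  rw [Matrix.det_eq_mul_det_of_castSucc_last_eq_zero]
  · have hsub : (Matrix.of fun j k : Fin (p + 1) =>
          pderiv ((Fin.snoc (u ∘ cols) y : Fin (p + 1) → τ) k)
            ((Fin.snoc (fun i => rename u (f i)) G : Fin (r + 1) → MvPolynomial τ R)
              ((Fin.snoc (Fin.castSucc ∘ rows) (Fin.last r) : Fin (p + 1) → Fin (r + 1)) j))
          ).submatrix Fin.castSucc Fin.castSucc =
        (Matrix.of fun j k : Fin p => pderiv (cols k) (f (rows j))).map (rename u) := by
      ext j k
      simp [pderiv_rename hu]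
    rw [hsub, ← AlgHom.coe_toRingHom, RingHom.map_det]
    simp
  · intro i
    simp [pderiv_rename_of_notMem_range hy]

theorem span_pderiv_mul_map_elkikH_le [DecidableEq σ] [DecidableEq τ] {u : σ → τ}
    (hu : Function.Injective u) {y : τ} (hy : y ∉ Set.range u) (f : Fin r → MvPolynomial σ R)
    (G : MvPolynomial τ R) :
    Ideal.span {pderiv y G} * Ideal.map (rename u) (elkikH f) ≤
      elkikH (Fin.snoc (fun i => rename u (f i)) G) := by
  set H := elkikH (Fin.snoc (fun i => rename u (f i)) G)
  suffices h : elkikH f ≤ (H.colon {pderiv y G}).comap (rename u) by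
    rw [Ideal.span_singleton_mul_le_iff]
    intro z hz
    simpa [Submodule.mem_colon_singleton, mul_comm] using Ideal.map_le_iff_le_comap.2 h hz
  refine iSup_le fun p => iSup_le fun hp => iSup_le fun rows => iSup_le fun hrows => ?_
  refine Ideal.mul_le.2 fun d hd a ha => ?_
  suffices hd' : d ∈ ((H.colon {pderiv y G}).comap (rename u)).colon {a} by
    simpa [Submodule.mem_colon_singleton] using hd'
  refine Ideal.span_le.2 ?_ hd
  rintro _ ⟨cols, rfl⟩
  have hmem := det_mul_mem_elkikH _ p.succ_pos (Fin.strictMono_snoc_castSucc_comp_last hrows)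
    (Fin.snoc (u ∘ cols) y) (map_mem_colon_snoc (rename u) f G rows ha)
  rw [det_pderiv_snoc hu hy] at hmem
  simp only [SetLike.mem_coe, Submodule.mem_colon_singleton, Ideal.mem_comap, smul_eq_mul, map_mul]
  convert hmem using 1
  ring

end ElkikIdeal

theorem elkikH_enlarge_general
    (R : Type*) [CommRing R]
    (N r M T : ℕ) (f : Fin r → MvPolynomial (Fin N) R)
    (g : Fin M → MvPolynomial (Fin N) R)
    (hg : elkikH f = Ideal.span (Set.range g))
    (h : MvPolynomial (Fin N ⊕ Fin T) R) :
    (Ideal.map (rename (Sum.inl : Fin N → Fin N ⊕ (Fin M ⊕ Fin T))) (elkikH f)) ^ 2 ≤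
      elkikH (Fin.snoc (fun i => rename (Sum.inl : Fin N → Fin N ⊕ (Fin M ⊕ Fin T)) (f i))
        (rename (Sum.map id (Sum.inr : Fin T → Fin M ⊕ Fin T)) h +
          ∑ j : Fin M, X (Sum.inr (Sum.inl j)) * rename Sum.inl (g j))) := by
  set φ := rename (R := R) (Sum.inl : Fin N → Fin N ⊕ (Fin M ⊕ Fin T))
  set G : MvPolynomial (Fin N ⊕ (Fin M ⊕ Fin T)) R :=
    rename (Sum.map id (Sum.inr : Fin T → Fin M ⊕ Fin T)) h +
      ∑ j : Fin M, X (Sum.inr (Sum.inl j)) * φ (g j)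
  have hY : ∀ j : Fin M, (Sum.inr (Sum.inl j) : Fin N ⊕ (Fin M ⊕ Fin T)) ∉ Set.range Sum.inl := by
    simp
  have hG (j : Fin M) : pderiv (Sum.inr (Sum.inl j)) G = φ (g j) := by
    rw [map_add, pderiv_rename_of_notMem_range (by rintro ⟨_ | _, hw⟩ <;> simp at hw), zero_add]
    exact pderiv_sum_X_mul (e := Sum.inr ∘ Sum.inl) (Sum.inr_injective.comp Sum.inl_injective)
      (fun j k => pderiv_rename_of_notMem_range (hY j) _) j
  have hsq : Ideal.map φ (elkikH f) ^ 2 =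
      (⨆ j, Ideal.span {φ (g j)}) * Ideal.map φ (elkikH f) := by
    rw [sq]
    congr 1
    rw [hg, Ideal.map_span, ← Set.range_comp, ← Set.iUnion_singleton_eq_range, Ideal.span_iUnion]
    rfl
  rw [hsq, Ideal.iSup_mul]
  exact iSup_le fun j => hG j ▸ span_pderiv_mul_map_elkikH_le Sum.inl_injective (hY j) f G

/-- **Lemma (enlarging the system).** Let `f = (f₁,…,f_r) ⊆ R[X]` with `H_{f/R}` generated by
`g₁,…,g_M`.  For new variables `Y = (Y₁,…,Y_M)`, `Z = (Z₁,…,Z_T)` and any `h ∈ R[X,Z]`, set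
`G = h + Y₁g₁ + ⋯ + Y_M g_M ∈ R[X,Y,Z]`.  Then
`H_{(f₁,…,f_r,G)/R} ⊇ (H_{f/R})² R[X,Y,Z]`. -/
theorem elkikH_enlarge
    (R : Type*) [CommRing R] [IsNoetherianRing R]
    (N r M T : ℕ) (f : Fin r → MvPolynomial (Fin N) R)
    (g : Fin M → MvPolynomial (Fin N) R)
    (hg : elkikH f = Ideal.span (Set.range g))
    (h : MvPolynomial (Fin N ⊕ Fin T) R) :
    (Ideal.map (rename (Sum.inl : Fin N → Fin N ⊕ (Fin M ⊕ Fin T))) (elkikH f)) ^ 2 ≤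
      elkikH (Fin.snoc (fun i => rename (Sum.inl : Fin N → Fin N ⊕ (Fin M ⊕ Fin T)) (f i))
        (rename (Sum.map id (Sum.inr : Fin T → Fin M ⊕ Fin T)) h +
          ∑ j : Fin M, X (Sum.inr (Sum.inl j)) * rename Sum.inl (g j))) :=
  elkikH_enlarge_general R N r M T f g hg h
end

section
/- Let (R,m) be a Noetherian local ring. Then every finite system of linear polynomials fᵢ = c_{i1}X₁ + … + c_{iN}X_N + dᵢ (i = 1,…,r) with coefficients c_{ij}, dᵢ ∈ R admits an Artin bound that is bounded above by a linear function of n; that is, every system of (possibly inhomogeneous) linear equations over R has the linear approximation property. -/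
/-!
Write the system as `φ x + d = 0` with `φ : Rᴺ → Rʳ` the linear map of the matrix `c`.
If it has a solution `b₀`, then `φ a + d = φ (a - b₀)` lies in `range φ`, and the Artin–Rees lemma
gives `k` with `mᵏ⁺ⁿ Rʳ ∩ range φ ⊆ mⁿ (range φ) = φ (mⁿ Rᴺ)`; so an approximate solution modulo
`mⁿ⁺ᵏ` is corrected to an exact one by an element of `mⁿ Rᴺ`.
If it has no solution, the class of `d` in `Rʳ / range φ` is nonzero, so by Krull's intersection
theorem it avoids `mᵏ (Rʳ / range φ)` for some `k`, and then `φ a + d ∉ mᵏ Rʳ` for every `a`.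
In both cases `β n = n + k` is an Artin bound.
-/

open MvPolynomial IsLocalRing

theorem Submodule.mem_ideal_smul_top_pi_iff {R ι : Type*} [CommSemiring R] [Fintype ι]
    (I : Ideal R) (x : ι → R) : x ∈ I • (⊤ : Submodule R (ι → R)) ↔ ∀ i, x i ∈ I := by
  classical
  constructor
  · intro hx i
    exact Submodule.smul_induction_on hx (fun r hr y _ => I.mul_mem_right _ hr)
      (fun _ _ hy hz => I.add_mem hy hz)
  · intro hx
    rw [← Finset.univ_sum_single x]
    refine Submodule.sum_mem _ fun i _ => ?_
    rw [← mul_one (x i), ← smul_eq_mul, Pi.single_smul']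
    exact Submodule.smul_mem_smul (hx i) Submodule.mem_top

namespace LinearMap

variable {R M F : Type*} [CommRing R] [AddCommGroup M] [Module R M] [AddCommGroup F] [Module R F]
  (I : Ideal R) (φ : M →ₗ[R] F) (d : F)

theorem exists_artin_bound_of_exists_solution [IsNoetherianRing R] [Module.Finite R F]
    (hsol : ∃ b₀, φ b₀ + d = 0) :
    ∃ k, ∀ n a, φ a + d ∈ I ^ (n + k) • (⊤ : Submodule R F) →
      ∃ b, φ b + d = 0 ∧ a - b ∈ I ^ n • (⊤ : Submodule R M) := by
  obtain ⟨b₀, hb₀⟩ := hsol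
  obtain ⟨k, hk⟩ := I.exists_pow_inf_eq_pow_smul (LinearMap.range φ)
  refine ⟨k, fun n a ha => ?_⟩
  have hrange : φ a + d = φ (a - b₀) := by
    rw [map_sub, eq_neg_of_add_eq_zero_left hb₀, sub_neg_eq_add]
  have hmem : φ a + d ∈ I ^ (n + k) • ⊤ ⊓ LinearMap.range φ :=
    ⟨ha, hrange ▸ LinearMap.mem_range_self φ _⟩
  rw [hk (n + k) (Nat.le_add_left k n), Nat.add_sub_cancel] at hmem
  have hmap : φ a + d ∈ (I ^ n • (⊤ : Submodule R M)).map φ := by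
    rw [Submodule.map_smul'', Submodule.map_top]
    exact Submodule.smul_mono le_rfl inf_le_right hmem
  obtain ⟨z, hz, hφz⟩ := hmap
  exact ⟨a - z, by rw [map_sub, hφz, sub_add_eq_add_sub, sub_self],
    by rwa [sub_sub_cancel]⟩

theorem exists_pow_smul_top_notMem_of_not_exists_solution [IsNoetherianRing R] [IsLocalRing R]
    [Module.Finite R F] (hI : I ≠ ⊤) (hsol : ¬ ∃ b, φ b + d = 0) :
    ∃ k, ∀ a, φ a + d ∉ I ^ k • (⊤ : Submodule R F) := by
  set π := (LinearMap.range φ).mkQ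
  have hd : π d ≠ 0 := by
    intro hd
    obtain ⟨b, hb⟩ := (Submodule.Quotient.mk_eq_zero _).mp hd
    exact hsol ⟨-b, by rw [map_neg, hb, neg_add_cancel]⟩
  obtain ⟨k, hk⟩ : ∃ k, π d ∉ I ^ k • (⊤ : Submodule R (F ⧸ LinearMap.range φ)) := by
    by_contra! h
    refine hd ((Submodule.mem_bot R).mp ?_)
    rw [← I.iInf_pow_smul_eq_bot_of_isLocalRing hI]
    exact Submodule.mem_iInf _ |>.mpr h
  refine ⟨k, fun a ha => hk ?_⟩
  have hπ : π (φ a + d) = π d := by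
    rw [map_add, Submodule.mkQ_apply, Submodule.Quotient.mk_eq_zero _ |>.mpr
      (LinearMap.mem_range_self φ a), zero_add]
  have hmap := Submodule.mem_map_of_mem (f := π) ha
  rw [Submodule.map_smul'', Submodule.map_top, hπ] at hmap
  exact Submodule.smul_mono le_rfl le_top hmap

theorem exists_artin_bound [IsNoetherianRing R] [IsLocalRing R] [Module.Finite R F]
    (hI : I ≠ ⊤) :
    ∃ k, ∀ n a, φ a + d ∈ I ^ (n + k) • (⊤ : Submodule R F) →
      ∃ b, φ b + d = 0 ∧ a - b ∈ I ^ n • (⊤ : Submodule R M) := by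
  by_cases hsol : ∃ b₀, φ b₀ + d = 0
  · exact φ.exists_artin_bound_of_exists_solution I d hsol
  · obtain ⟨k, hk⟩ := φ.exists_pow_smul_top_notMem_of_not_exists_solution I d hI hsol
    refine ⟨k, fun n a ha => absurd ?_ (hk a)⟩
    exact Submodule.smul_mono_left (Ideal.pow_le_pow_right (Nat.le_add_left k n)) ha

end LinearMap

/-- **Lemma (linear equations).** Over a Noetherian local ring `(R, m)`, every finite system of
(possibly inhomogeneous) linear polynomials `fᵢ = c_{i1}X₁ + ⋯ + c_{iN}X_N + dᵢ` admits an
Artin bound that is bounded above by a linear function of `n`. -/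
theorem lap_of_linear_system
    (R : Type*) [CommRing R] [IsNoetherianRing R] [IsLocalRing R]
    (N r : ℕ) (c : Fin r → Fin N → R) (d : Fin r → R) :
    ∃ (β : ℕ → ℕ) (c' e : ℕ),
      IsArtinBound (maximalIdeal R)
        (fun i => (∑ j : Fin N, C (c i j) * X j) + C (d i)) β ∧
      ∀ n, β n ≤ c' * n + e := by
  obtain ⟨k, hk⟩ := (Matrix.of c).mulVecLin.exists_artin_bound (maximalIdeal R) d
    (maximalIdeal.isMaximal R).ne_top
  have heval : ∀ (a : Fin N → R) i,
      eval a ((∑ j : Fin N, C (c i j) * X j) + C (d i)) = ((Matrix.of c).mulVec a + d) i := by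
    intro a i
    simp [Matrix.mulVec, dotProduct]
  refine ⟨(· + k), 1, k, fun n a ha => ?_, fun n => by rw [one_mul]⟩
  simp only [heval, ← Submodule.mem_ideal_smul_top_pi_iff] at ha
  obtain ⟨b, hb, hab⟩ := hk n a ha
  refine ⟨b, fun i => ?_, (Submodule.mem_ideal_smul_top_pi_iff _ _).mp hab⟩
  rw [heval]
  exact congrFun hb i
end

section
/- Let (R,m) be a Noetherian local domain and let α₁,…,α_k ∈ ℤ^N_{≥0} be nonzero multi-indices such that each single monomial X^{αᵢ} admits an Artin function β_•(X^{αᵢ}). Then for every n ∈ ℕ and every a ∈ R^N with a^{αᵢ} ∈ m^{M} for all i, where M = max_{1≤i≤k} β_n(X^{αᵢ}), there exists b ∈ R^N with b^{αᵢ} = 0 for all i and a ≡ b (mod m^n R^N); that is, β_n(X^{α₁},…,X^{α_k}) ≤ max_{1≤i≤k} β_n(X^{αᵢ}). -/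
/-!
Applying the Artin bound of a single monomial `X^{αᵢ}` to `a` gives a zero `b` of `X^{αᵢ}` with
`b ≡ a (mod mⁿ)`; in a domain some `b_j` with `αᵢⱼ ≠ 0` vanishes, so `a_j ∈ mⁿ`. Replacing by `0`
every coordinate of `a` lying in `mⁿ` therefore kills all the monomials at once.
-/

open IsLocalRing

theorem Finset.exists_ne_zero_and_eq_zero_of_prod_pow_eq_zero {ι M₀ : Type*}
    [CommMonoidWithZero M₀] [NoZeroDivisors M₀] [Nontrivial M₀] {s : Finset ι}
    {b : ι → M₀} {e : ι → ℕ} (h : ∏ j ∈ s, b j ^ e j = 0) :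
    ∃ j ∈ s, e j ≠ 0 ∧ b j = 0 := by
  obtain ⟨j, hj, hbj⟩ := Finset.prod_eq_zero_iff.mp h
  exact ⟨j, hj, (pow_eq_zero_iff'.mp hbj).2, (pow_eq_zero_iff'.mp hbj).1⟩

theorem exists_ne_zero_and_mem_of_prod_pow_eq_zero {ι R : Type*} [Fintype ι] [CommRing R]
    [IsDomain R] {I : Ideal R} {a b : ι → R} {e : ι → ℕ} (hb : ∏ j, b j ^ e j = 0)
    (hab : ∀ j, a j - b j ∈ I) : ∃ j, e j ≠ 0 ∧ a j ∈ I := by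
  obtain ⟨j, -, hej, hbj⟩ := Finset.exists_ne_zero_and_eq_zero_of_prod_pow_eq_zero hb
  exact ⟨j, hej, by simpa [hbj] using hab j⟩

theorem exists_forall_prod_pow_eq_zero_of_forall_exists_mem {ι κ R : Type*} [Fintype ι]
    [CommRing R] (I : Ideal R) (e : κ → ι → ℕ) (a : ι → R)
    (h : ∀ i, ∃ j, e i j ≠ 0 ∧ a j ∈ I) :
    ∃ b : ι → R, (∀ i, ∏ j, b j ^ e i j = 0) ∧ ∀ j, a j - b j ∈ I := by
  classical
  refine ⟨fun j => if a j ∈ I then 0 else a j, fun i => ?_, fun j => ?_⟩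
  · obtain ⟨j, hej, haj⟩ := h i
    exact Finset.prod_eq_zero (Finset.mem_univ j) (by simp [haj, zero_pow hej])
  · by_cases haj : a j ∈ I <;> simp [haj]

theorem monomial_system_bound_le_max_general
    (R : Type*) [CommRing R] [IsDomain R] [IsLocalRing R]
    (N k : ℕ) (α : Fin k → Fin N → ℕ)
    (βf : Fin k → ℕ → ℕ)
    (hβf : ∀ i : Fin k, ∀ n : ℕ, ∀ a : Fin N → R,
      (∏ j, a j ^ α i j) ∈ maximalIdeal R ^ βf i n →
      ∃ b : Fin N → R, (∏ j, b j ^ α i j) = 0 ∧ ∀ j, a j - b j ∈ maximalIdeal R ^ n) :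
    ∀ n : ℕ, ∀ a : Fin N → R,
      (∀ i, (∏ j, a j ^ α i j) ∈ maximalIdeal R ^ (Finset.univ.sup fun i => βf i n)) →
      ∃ b : Fin N → R, (∀ i, (∏ j, b j ^ α i j) = 0) ∧
        ∀ j, a j - b j ∈ maximalIdeal R ^ n := by
  intro n a ha
  refine exists_forall_prod_pow_eq_zero_of_forall_exists_mem _ α a fun i => ?_
  obtain ⟨b, hb, hab⟩ := hβf i n a
    (Ideal.pow_le_pow_right (Finset.le_sup (Finset.mem_univ i)) (ha i))
  exact exists_ne_zero_and_mem_of_prod_pow_eq_zero hb hab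

/-- **Lemma.** Let `(R, m)` be a Noetherian local domain and `α₁,…,α_k` nonzero multi-indices
such that each single monomial `X^{αᵢ}` admits an Artin bound `βf i`.  Then for every `n` and
every `a ∈ R^N` with `a^{αᵢ} ∈ m^M` for all `i`, where `M = max_i (βf i n)`, there is `b ∈ R^N`
with `b^{αᵢ} = 0` for all `i` and `a ≡ b (mod mⁿ R^N)`; that is,
`β_n(X^{α₁},…,X^{α_k}) ≤ max_i β_n(X^{αᵢ})`. -/
theorem monomial_system_bound_le_max
    (R : Type*) [CommRing R] [IsDomain R] [IsNoetherianRing R] [IsLocalRing R]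
    (N k : ℕ) (α : Fin k → Fin N → ℕ) (hα : ∀ i, α i ≠ 0)
    (βf : Fin k → ℕ → ℕ)
    (hβf : ∀ i : Fin k, ∀ n : ℕ, ∀ a : Fin N → R,
      (∏ j, a j ^ α i j) ∈ maximalIdeal R ^ βf i n →
      ∃ b : Fin N → R, (∏ j, b j ^ α i j) = 0 ∧ ∀ j, a j - b j ∈ maximalIdeal R ^ n) :
    ∀ n : ℕ, ∀ a : Fin N → R,
      (∀ i, (∏ j, a j ^ α i j) ∈ maximalIdeal R ^ (Finset.univ.sup fun i => βf i n)) →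
      ∃ b : Fin N → R, (∀ i, (∏ j, b j ^ α i j) = 0) ∧
        ∀ j, a j - b j ∈ maximalIdeal R ^ n :=
  monomial_system_bound_le_max_general R N k α βf hβf
end

section
/- Let (R,m) be a Noetherian local domain whose m-adic completion is not an integral domain. Then the Artin function of the polynomial X₁X₂ over R does not exist: there exists n ∈ ℕ such that for every c ∈ ℕ there exist u, v ∈ R with uv ∈ m^c, u ∉ m^n, and v ∉ m^n. (Since R is a domain, every exact solution (u′,v′) of X₁X₂ = 0 has u′ = 0 or v′ = 0, so no exact solution is congruent to (u,v) modulo m^n.) -/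
/-!
Zero divisors `x * y = 0`, `x, y ≠ 0`, of the `m`-adic completion are both nonzero modulo `mⁿ`
for some `n`. Lifting the components of `x` and `y` at a level `k ≥ max n c` to `u, v ∈ R`
gives `u * v ∈ m^k ⊆ m^c`, while `u, v ∉ mⁿ` because their images in `R ⧸ mⁿ` are those of `x, y`.
-/

open IsLocalRing Filter

theorem exists_mul_eq_zero_of_not_isDomain {A : Type*} [Ring A] [Nontrivial A]
    (h : ¬ IsDomain A) : ∃ x y : A, x * y = 0 ∧ x ≠ 0 ∧ y ≠ 0 := by
  contrapose! h
  exact (isDomain_iff_noZeroDivisors_and_nontrivial A).mpr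
    ⟨noZeroDivisors_iff_right_eq_zero_of_mul.mpr fun x hx y hxy ↦ h x y hxy hx, ‹_›⟩

namespace AdicCompletion

variable {R : Type*} [CommRing R] {I : Ideal R}

theorem nontrivial_of_ne_top (hI : I ≠ ⊤) : Nontrivial (AdicCompletion I R) :=
  have : Nontrivial (R ⧸ I) := Ideal.Quotient.nontrivial_iff.mpr hI
  (evalOneₐ_surjective I).nontrivial

theorem factor_evalₐ {m n : ℕ} (hmn : m ≤ n) (x : AdicCompletion I R) :
    Ideal.Quotient.factor (Ideal.pow_le_pow_right hmn) (evalₐ I n x) = evalₐ I m x := by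
  induction x using induction_on with
  | h f => rw [evalₐ_mk, evalₐ_mk, Ideal.Quotient.factor_mk, ← Ideal.mk_eq_mk I hmn]

theorem eventually_evalₐ_ne_zero {x : AdicCompletion I R} (hx : x ≠ 0) :
    ∀ᶠ n in atTop, evalₐ I n x ≠ 0 := by
  obtain ⟨a, ha⟩ : ∃ a, evalₐ I a x ≠ 0 := by
    by_contra! h
    exact hx (ext_evalₐ fun n ↦ by rw [h n, _root_.map_zero])
  refine eventually_atTop.mpr ⟨a, fun n han hn ↦ ha ?_⟩
  rw [← factor_evalₐ han, hn, _root_.map_zero]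

theorem exists_mul_mem_pow_of_mul_eq_zero {x y : AdicCompletion I R} (hxy : x * y = 0) {n : ℕ}
    (hx : evalₐ I n x ≠ 0) (hy : evalₐ I n y ≠ 0) (c : ℕ) :
    ∃ u v : R, u * v ∈ I ^ c ∧ u ∉ I ^ n ∧ v ∉ I ^ n := by
  obtain ⟨u, hu⟩ := Ideal.Quotient.mk_surjective (evalₐ I (max n c) x)
  obtain ⟨v, hv⟩ := Ideal.Quotient.mk_surjective (evalₐ I (max n c) y)
  have evalₐ_eq_zero_of_lift_mem : ∀ {z : AdicCompletion I R} {w : R},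
      Ideal.Quotient.mk _ w = evalₐ I (max n c) z → w ∈ I ^ n → evalₐ I n z = 0 := by
    intro z w hw hmem
    rwa [← factor_evalₐ (le_max_left n c), ← hw, Ideal.Quotient.factor_mk,
      Ideal.Quotient.eq_zero_iff_mem]
  refine ⟨u, v, ?_, fun hu' ↦ hx (evalₐ_eq_zero_of_lift_mem hu hu'),
    fun hv' ↦ hy (evalₐ_eq_zero_of_lift_mem hv hv')⟩
  apply Ideal.pow_le_pow_right (le_max_right n c)
  rw [← Ideal.Quotient.eq_zero_iff_mem, map_mul, hu, hv, ← map_mul, hxy, _root_.map_zero]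

end AdicCompletion

theorem artin_function_of_product_does_not_exist_general
    (R : Type*) [CommRing R] [IsLocalRing R]
    (hnot : ¬ IsDomain (AdicCompletion (maximalIdeal R) R)) :
    ∃ n : ℕ, ∀ c : ℕ, ∃ u v : R,
      u * v ∈ maximalIdeal R ^ c ∧ u ∉ maximalIdeal R ^ n ∧ v ∉ maximalIdeal R ^ n := by
  have := AdicCompletion.nontrivial_of_ne_top (maximalIdeal.isMaximal R).ne_top
  obtain ⟨x, y, hxy, hx, hy⟩ := exists_mul_eq_zero_of_not_isDomain hnot
  obtain ⟨n, hxn, hyn⟩ :=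
    ((AdicCompletion.eventually_evalₐ_ne_zero hx).and
      (AdicCompletion.eventually_evalₐ_ne_zero hy)).exists
  exact ⟨n, AdicCompletion.exists_mul_mem_pow_of_mul_eq_zero hxy hxn hyn⟩

/-- **Lemma.** Let `(R, m)` be a Noetherian local domain whose `m`-adic completion is not a
domain.  Then the Artin function of `X₁X₂` does not exist: there is `n` such that for every `c`
there are `u, v ∈ R` with `uv ∈ m^c`, `u ∉ mⁿ` and `v ∉ mⁿ`. -/
theorem artin_function_of_product_does_not_exist
    (R : Type*) [CommRing R] [IsDomain R] [IsNoetherianRing R] [IsLocalRing R]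
    (hnot : ¬ IsDomain (AdicCompletion (maximalIdeal R) R)) :
    ∃ n : ℕ, ∀ c : ℕ, ∃ u v : R,
      u * v ∈ maximalIdeal R ^ c ∧ u ∉ maximalIdeal R ^ n ∧ v ∉ maximalIdeal R ^ n :=
  artin_function_of_product_does_not_exist_general R hnot
end

section
/- Let (R,(t)) be a discrete valuation ring with uniformizer t, let k ≤ l be positive integers and 1 ≤ r ≤ k. Then for every n ≥ 1 and every k×l matrix A with entries in R all of whose r×r minors lie in the ideal (t)^{rn−r+1}, there exists a k×l matrix B with entries in R all of whose r×r minors are zero and with A ≡ B (mod (t)^n) entrywise. -/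
/-!
Let `v q` be the `t`-adic valuation of the ideal of `q × q` minors of `A`. Then `v 0 = 0` and
`v r > r (n - 1)`, so the valuations cannot grow by less than `n` at every step: some `s < r` has
`v s` finite and `v (s + 1) ≥ v s + n`. Choose an `s × s` minor `M = A[ρ, σ]` of valuation `v s`.
Every minor bordering `M` by a row `i` and a column `j` is then `det M · tⁿ · c i j`, and by the
Schur complement formula `A - tⁿ c = A[·, σ] M⁻¹ A[ρ, ·]` over the fraction field. This matrix
factors through an `s`-dimensional space, so its `r × r` minors vanish.
-/

open IsLocalRing

namespace Matrix

lemma det_submatrix_mem_of_forall_strictMono {R m n : Type*} [CommRing R] [LinearOrder m]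
    [LinearOrder n] (A : Matrix m n R) {I : Ideal R} {q : ℕ}
    (h : ∀ (ρ : Fin q → m) (σ : Fin q → n), StrictMono ρ → StrictMono σ →
      (A.submatrix ρ σ).det ∈ I)
    (ρ : Fin q → m) (σ : Fin q → n) : (A.submatrix ρ σ).det ∈ I := by
  by_cases hρ : ρ.Injective
  swap
  · obtain ⟨a, b, hab, hne⟩ := Function.not_injective_iff.mp hρ
    rw [det_zero_of_row_eq hne (by ext; simp [hab])]
    exact I.zero_mem
  by_cases hσ : σ.Injective
  swap
  · obtain ⟨a, b, hab, hne⟩ := Function.not_injective_iff.mp hσ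
    rw [det_zero_of_column_eq hne (by simp [hab])]
    exact I.zero_mem
  set π := Tuple.sort ρ
  set τ := Tuple.sort σ
  have hsorted : (A.submatrix (ρ ∘ π) (σ ∘ τ)).det ∈ I :=
    h _ _ ((Tuple.monotone_sort ρ).strictMono_of_injective (hρ.comp π.injective))
      ((Tuple.monotone_sort σ).strictMono_of_injective (hσ.comp τ.injective))
  have hperm : A.submatrix ρ σ =
      (((A.submatrix (ρ ∘ π) (σ ∘ τ)).submatrix id ⇑τ⁻¹).submatrix ⇑π⁻¹ id) := by
    ext; simp
  rw [hperm, det_permute, det_permute']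
  exact I.mul_mem_left _ (I.mul_mem_left _ hsorted)

lemma det_mul_eq_zero_of_card_lt {K : Type*} [Field K] {ι κ : Type*} [Fintype ι] [Fintype κ]
    [DecidableEq κ] (P : Matrix κ ι K) (Q : Matrix ι κ K)
    (h : Fintype.card ι < Fintype.card κ) : (P * Q).det = 0 := by
  by_contra hdet
  have hrank : (P * Q).rank = Fintype.card κ :=
    rank_of_isUnit _ ((isUnit_iff_isUnit_det _).mpr (isUnit_iff_ne_zero.mpr hdet))
  have := (rank_mul_le_left P Q).trans (rank_le_card_width P)
  omega

lemma det_submatrix_sumElim_unit {K : Type*} [Field K] {m n ι : Type*} [Fintype ι] [DecidableEq ι]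
    (A : Matrix m n K) (ρ : ι → m) (σ : ι → n) (hdet : (A.submatrix ρ σ).det ≠ 0)
    (i : m) (j : n) :
    (A.submatrix (Sum.elim ρ fun _ : Unit => i) (Sum.elim σ fun _ : Unit => j)).det =
      (A.submatrix ρ σ).det *
        (A - A.submatrix id σ * (A.submatrix ρ σ)⁻¹ * A.submatrix ρ id) i j := by
  have : Invertible (A.submatrix ρ σ) := invertibleOfIsUnitDet _ (isUnit_iff_ne_zero.mpr hdet)
  have hblocks : A.submatrix (Sum.elim ρ fun _ : Unit => i) (Sum.elim σ fun _ : Unit => j) =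
      fromBlocks (A.submatrix ρ σ) (A.submatrix ρ fun _ => j) (A.submatrix (fun _ => i) σ)
        (of fun _ _ => A i j) := by
    ext (a | a) (b | b) <;> rfl
  rw [hblocks, det_fromBlocks₁₁, invOf_eq_nonsing_inv, det_unique (n := Unit)]
  simp [mul_apply]

lemma det_submatrix_sub_eq_zero_of_det_sumElim {R : Type*} [CommRing R] [IsDomain R]
    {m n ι κ : Type*} [Fintype ι] [DecidableEq ι] [Fintype κ] [DecidableEq κ]
    (A E : Matrix m n R) (ρ : ι → m) (σ : ι → n) (hdet : (A.submatrix ρ σ).det ≠ 0)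
    (hE : ∀ i j, (A.submatrix (Sum.elim ρ fun _ : Unit => i) (Sum.elim σ fun _ : Unit => j)).det =
      (A.submatrix ρ σ).det * E i j)
    (hcard : Fintype.card ι < Fintype.card κ) (rows : κ → m) (cols : κ → n) :
    ((A - E).submatrix rows cols).det = 0 := by
  let φ := algebraMap R (FractionRing R)
  have hφ : Function.Injective φ := IsFractionRing.injective R (FractionRing R)
  have hdetφ : ((A.map φ).submatrix ρ σ).det = φ (A.submatrix ρ σ).det := by
    rw [RingHom.map_det]; rfl
  have hdetφ0 : ((A.map φ).submatrix ρ σ).det ≠ 0 := by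
    rwa [hdetφ, map_ne_zero_iff φ hφ]
  have hfactor : (A - E).map φ = (A.map φ).submatrix id σ * ((A.map φ).submatrix ρ σ)⁻¹ *
      (A.map φ).submatrix ρ id := by
    ext i j
    have hschur := det_submatrix_sumElim_unit (A.map φ) ρ σ hdetφ0 i j
    rw [submatrix_map, ← RingHom.mapMatrix_apply, ← RingHom.map_det, hE, map_mul, ← hdetφ]
      at hschur
    have := mul_left_cancel₀ hdetφ0 hschur
    simp only [map_apply, sub_apply, map_sub] at this ⊢
    rw [this]; ring
  apply hφ
  rw [map_zero, RingHom.map_det, RingHom.mapMatrix_apply, ← submatrix_map, hfactor,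
    submatrix_mul _ _ _ _ _ Function.bijective_id]
  exact det_mul_eq_zero_of_card_lt _ _ hcard

end Matrix

lemma ENat.le_mul_sub_one_of_forall_lt_add {v : ℕ → ℕ∞} {n r : ℕ} (h0 : v 0 = 0)
    (hstep : ∀ q < r, v q ≠ ⊤ → v (q + 1) < v q + n) : v r ≤ (r * (n - 1) : ℕ) := by
  suffices ∀ q ≤ r, v q ≤ (q * (n - 1) : ℕ) from this r le_rfl
  intro q
  induction q with
  | zero => simp [h0]
  | succ q ih =>
    intro hq
    have hvq := ih (by omega)
    obtain ⟨a, ha⟩ := ENat.ne_top_iff_exists.mp (ne_top_of_le_ne_top (ENat.natCast_ne_top _) hvq)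
    have hlt := hstep q (by omega) (by simp [← ha])
    obtain ⟨b, hb⟩ := ENat.ne_top_iff_exists.mp hlt.ne_top
    rw [← ha] at hvq hlt
    rw [← hb] at hlt ⊢
    norm_cast at hvq hlt ⊢
    rw [add_one_mul]
    omega

namespace Matrix

open IsDiscreteValuationRing

variable {R : Type*} [CommRing R] [IsDomain R] [IsDiscreteValuationRing R] {m n : Type*}

/-- The `t`-adic valuation of the ideal generated by the `q × q` minors of `A`. -/
noncomputable def minorAddVal (A : Matrix m n R) (q : ℕ) : ℕ∞ :=
  ⨅ p : (Fin q → m) × (Fin q → n), addVal R (A.submatrix p.1 p.2).det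

@[simp]
lemma minorAddVal_zero (A : Matrix m n R) : A.minorAddVal 0 = 0 := by
  simp [minorAddVal]

lemma minorAddVal_le (A : Matrix m n R) {q : ℕ} {ι : Type*} [Fintype ι] [DecidableEq ι]
    (hι : Fintype.card ι = q) (f : ι → m) (g : ι → n) :
    A.minorAddVal q ≤ addVal R (A.submatrix f g).det := by
  let e := (Fintype.equivFinOfCardEq hι).symm
  rw [← det_submatrix_equiv_self e, submatrix_submatrix]
  exact iInf_le (fun p : (Fin q → m) × (Fin q → n) => addVal R (A.submatrix p.1 p.2).det)
    (f ∘ e, g ∘ e)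

lemma exists_addVal_det_eq_minorAddVal (A : Matrix m n R) {q : ℕ} (h : A.minorAddVal q ≠ ⊤) :
    ∃ (ρ : Fin q → m) (σ : Fin q → n), addVal R (A.submatrix ρ σ).det = A.minorAddVal q := by
  have : Nonempty ((Fin q → m) × (Fin q → n)) :=
    not_isEmpty_iff.mp fun _ => h (iInf_of_empty _)
  obtain ⟨⟨ρ, σ⟩, hp⟩ := ENat.exists_eq_iInf
    (fun p : (Fin q → m) × (Fin q → n) => addVal R (A.submatrix p.1 p.2).det)
  exact ⟨ρ, σ, hp⟩

lemma le_minorAddVal_of_forall_strictMono [LinearOrder m] [LinearOrder n] (A : Matrix m n R)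
    {t : R} (ht : Irreducible t) {q e : ℕ}
    (h : ∀ (ρ : Fin q → m) (σ : Fin q → n), StrictMono ρ → StrictMono σ →
      (A.submatrix ρ σ).det ∈ Ideal.span {t} ^ e) :
    (e : ℕ∞) ≤ A.minorAddVal q := by
  refine le_iInf fun p => ?_
  have hdvd := A.det_submatrix_mem_of_forall_strictMono h p.1 p.2
  rw [Ideal.span_singleton_pow, Ideal.mem_span_singleton, ← addVal_le_iff_dvd, addVal_pow,
    addVal_uniformizer ht] at hdvd
  simpa using hdvd

lemma mul_pow_dvd_det_of_add_le_minorAddVal (A : Matrix m n R) {t : R} (ht : Irreducible t)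
    {a : R} {q e : ℕ} (h : addVal R a + e ≤ A.minorAddVal q) {ι : Type*} [Fintype ι]
    [DecidableEq ι] (hι : Fintype.card ι = q) (f : ι → m) (g : ι → n) :
    a * t ^ e ∣ (A.submatrix f g).det := by
  rw [← addVal_le_iff_dvd, addVal_mul, addVal_pow, addVal_uniformizer ht]
  simpa using h.trans (A.minorAddVal_le hι f g)

end Matrix

theorem determinantal_artin_upper_bound_general
    (R : Type*) [CommRing R] [IsDomain R] [IsDiscreteValuationRing R]
    (t : R) (ht : maximalIdeal R = Ideal.span {t})
    (k l r : ℕ)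
    (n : ℕ) (A : Matrix (Fin k) (Fin l) R)
    (hA : ∀ (rows : Fin r → Fin k) (cols : Fin r → Fin l), StrictMono rows → StrictMono cols →
      (A.submatrix rows cols).det ∈ Ideal.span {t} ^ (r * n - r + 1)) :
    ∃ B : Matrix (Fin k) (Fin l) R,
      (∀ (rows : Fin r → Fin k) (cols : Fin r → Fin l), StrictMono rows → StrictMono cols →
        (B.submatrix rows cols).det = 0) ∧
      ∀ i j, A i j - B i j ∈ Ideal.span {t} ^ n := by
  have hirr : Irreducible t := (IsDiscreteValuationRing.irreducible_iff_uniformizer t).mpr ht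
  rw [← Nat.mul_sub_one] at hA
  have hvr := A.le_minorAddVal_of_forall_strictMono hirr hA
  obtain ⟨s, hsr, hvs, hjump⟩ :
      ∃ s < r, A.minorAddVal s ≠ ⊤ ∧ A.minorAddVal s + n ≤ A.minorAddVal (s + 1) := by
    by_contra! hno
    have hle := hvr.trans (ENat.le_mul_sub_one_of_forall_lt_add A.minorAddVal_zero hno)
    norm_cast at hle
    omega
  obtain ⟨ρ, σ, hρσ⟩ := A.exists_addVal_det_eq_minorAddVal hvs
  choose c hc using fun i j => A.mul_pow_dvd_det_of_add_le_minorAddVal hirr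
    (hρσ ▸ hjump) (Fintype.card_sum.trans (by simp)) (Sum.elim ρ fun _ : Unit => i)
    (Sum.elim σ fun _ : Unit => j)
  refine ⟨A - t ^ n • Matrix.of c, fun rows cols _ _ => ?_, fun i j => ?_⟩
  · refine Matrix.det_submatrix_sub_eq_zero_of_det_sumElim A _ ρ σ ?_ (fun i j => ?_)
      (by simpa using hsr) rows cols
    · rwa [Ne, ← IsDiscreteValuationRing.addVal_eq_top_iff, hρσ]
    · simp [hc, mul_assoc]
  · simp [Ideal.span_singleton_pow, Ideal.mem_span_singleton]

/-- **Theorem (determinantal ideals over a DVR, upper bound).** Let `(R, (t))` be a discrete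
valuation ring with uniformizer `t`, let `k ≤ l` and `1 ≤ r ≤ k`.  For every `n ≥ 1` and every
`k × l` matrix `A` over `R` all of whose `r × r` minors lie in `(t)^(rn − r + 1)`, there is a
`k × l` matrix `B` over `R` all of whose `r × r` minors vanish with `A ≡ B (mod (t)ⁿ)`
entrywise. -/
theorem determinantal_artin_upper_bound
    (R : Type*) [CommRing R] [IsDomain R] [IsDiscreteValuationRing R]
    (t : R) (ht0 : t ≠ 0) (ht : maximalIdeal R = Ideal.span {t})
    (k l r : ℕ) (hk : 0 < k) (hkl : k ≤ l) (hr : 1 ≤ r) (hrk : r ≤ k)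
    (n : ℕ) (hn : 1 ≤ n) (A : Matrix (Fin k) (Fin l) R)
    (hA : ∀ (rows : Fin r → Fin k) (cols : Fin r → Fin l), StrictMono rows → StrictMono cols →
      (A.submatrix rows cols).det ∈ Ideal.span {t} ^ (r * n - r + 1)) :
    ∃ B : Matrix (Fin k) (Fin l) R,
      (∀ (rows : Fin r → Fin k) (cols : Fin r → Fin l), StrictMono rows → StrictMono cols →
        (B.submatrix rows cols).det = 0) ∧
      ∀ i j, A i j - B i j ∈ Ideal.span {t} ^ n :=
  determinantal_artin_upper_bound_general R t ht k l r n A hA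
end

section
/- Let (R,(t)) be a discrete valuation ring with uniformizer t, let k ≤ l be positive integers and 1 ≤ r ≤ k. Then for every n ≥ 1 there exists a k×l matrix A with entries in R all of whose r×r minors lie in the ideal (t)^{rn−r}, such that every k×l matrix B over R with A ≡ B (mod (t)^n) entrywise has some nonzero r×r minor. Consequently the Artin function of the ideal I_r of r×r minors of a k×l matrix of indeterminates satisfies β_n(I_r) > rn − r, and combined with the matching upper bound, β_n(I_r) = rn − r + 1. -/
/-!
Lower bound: `A = t^(n-1) • (k × l identity)` has all `r × r` minors in `(t)^(r(n-1))`, and any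
`B ≡ A (mod tⁿ)` has leading `r × r` block `t^(n-1) • (1 - t • E)`, whose determinant is
`t^(r(n-1))` times an element that is `1` modulo `t`, hence nonzero.

Upper bound: if all `r × r` minors of `A` lie in `(t)^(r(n-1)+1)`, then `A` is congruent modulo `tⁿ`
to a product `X * Y` through `r - 1` dimensions, whose `r × r` minors vanish. Take a pivot entry of
least valuation; it divides every entry. If `tⁿ` divides it, `A ≡ 0`. Otherwise subtract from `A`
the rank one matrix `c ⊗ (pivot row)`, `c = (pivot column) / pivot`. Bordering an
`(r-1) × (r-1)` minor of the remainder by the pivot row and column gives an `r × r` minor of `A`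
equal to the pivot times it; the pivot has valuation at most `n - 1`, so the remainder satisfies
the hypothesis for `r - 1`, and its factorisation extends by the column `c` and the pivot row.
-/

open IsLocalRing Matrix

section CommRing

variable {R : Type*} [CommRing R]

theorem Matrix.det_notMem_of_sub_one_mem {ι : Type*} [Fintype ι] [DecidableEq ι] {I : Ideal R}
    (hI : I ≠ ⊤) {M : Matrix ι ι R} (h : ∀ i j, (M - 1) i j ∈ I) : M.det ∉ I := by
  have : Nontrivial (R ⧸ I) := Ideal.Quotient.nontrivial_iff.mpr hI
  have hM : (Ideal.Quotient.mk I).mapMatrix M = 1 := by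
    ext i j
    have := Ideal.Quotient.eq_zero_iff_mem.mpr (h i j)
    rw [Matrix.sub_apply, map_sub, sub_eq_zero] at this
    simpa [one_apply, apply_ite] using this
  rw [← Ideal.Quotient.eq_zero_iff_mem, RingHom.map_det, hM, det_one]
  exact one_ne_zero

theorem Matrix.det_ne_zero_of_pow_dvd_pow_smul_one_sub [IsDomain R] {ι : Type*} [Fintype ι]
    [DecidableEq ι] {t : R} (ht0 : t ≠ 0) (ht : ¬IsUnit t) (n : ℕ) (M : Matrix ι ι R)
    (h : ∀ i j, t ^ (n + 1) ∣ (t ^ n • (1 : Matrix ι ι R) - M) i j) : M.det ≠ 0 := by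
  choose E hE using h
  have hM : M = t ^ n • (1 - t • of E) := by
    ext i j
    have := hE i j
    simp only [Matrix.sub_apply, smul_apply, smul_eq_mul, of_apply] at this ⊢
    linear_combination -this
  have hunit : (1 - t • of E).det ∉ Ideal.span {t} := by
    refine det_notMem_of_sub_one_mem (by simpa [Ideal.span_singleton_eq_top] using ht) fun i j => ?_
    simp [Ideal.mem_span_singleton]
  rw [hM, det_smul]
  exact mul_ne_zero (pow_ne_zero _ (pow_ne_zero _ ht0)) fun h => hunit (h ▸ zero_mem _)

theorem exists_pow_dvd_minors_and_minor_ne_zero_of_congr [IsDomain R] {t : R} (ht0 : t ≠ 0)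
    (ht : ¬IsUnit t) {k l r : ℕ} (hrk : r ≤ k) (hkl : k ≤ l) (n : ℕ) :
    ∃ A : Matrix (Fin k) (Fin l) R,
      (∀ (p : Fin r → Fin k) (q : Fin r → Fin l), t ^ (r * n) ∣ (A.submatrix p q).det) ∧
      ∀ B : Matrix (Fin k) (Fin l) R, (∀ i j, t ^ (n + 1) ∣ A i j - B i j) →
        ∃ (rows : Fin r → Fin k) (cols : Fin r → Fin l),
          StrictMono rows ∧ StrictMono cols ∧ (B.submatrix rows cols).det ≠ 0 := by
  refine ⟨t ^ n • of fun (i : Fin k) (j : Fin l) => if (i : ℕ) = j then 1 else 0,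
    fun p q => ?_, fun B hB => ?_⟩
  · rw [submatrix_smul, Pi.smul_apply, Pi.smul_apply, det_smul, Fintype.card_fin, ← pow_mul,
      mul_comm]
    exact dvd_mul_right _ _
  · refine ⟨Fin.castLE hrk, Fin.castLE (hrk.trans hkl), Fin.strictMono_castLE _,
      Fin.strictMono_castLE _, det_ne_zero_of_pow_dvd_pow_smul_one_sub ht0 ht n _ fun i j => ?_⟩
    convert hB (Fin.castLE hrk i) (Fin.castLE (hrk.trans hkl) j) using 2
    simp [one_apply, Fin.ext_iff]

theorem Matrix.det_submatrix_mem_of_strictMono {m o : Type*} [LinearOrder m] [LinearOrder o]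
    {r : ℕ} (A : Matrix m o R) {J : Ideal R}
    (h : ∀ (p : Fin r → m) (q : Fin r → o), StrictMono p → StrictMono q →
      (A.submatrix p q).det ∈ J)
    (p : Fin r → m) (q : Fin r → o) : (A.submatrix p q).det ∈ J := by
  by_cases hp : p.Injective
  · by_cases hq : q.Injective
    · have hsorted := h _ _
        ((Tuple.monotone_sort p).strictMono_of_injective (hp.comp (Equiv.injective _)))
        ((Tuple.monotone_sort q).strictMono_of_injective (hq.comp (Equiv.injective _)))
      have hsign : ∀ σ : Equiv.Perm (Fin r), IsUnit ((Equiv.Perm.sign σ : ℤ) : R) := fun σ =>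
        (Equiv.Perm.sign σ).isUnit.map (Int.castRingHom R)
      change (((A.submatrix p q).submatrix (Tuple.sort p) id).submatrix id (Tuple.sort q)).det ∈ J
        at hsorted
      rwa [det_permute', det_permute, Ideal.unit_mul_mem_iff_mem _ (hsign _),
        Ideal.unit_mul_mem_iff_mem _ (hsign _)] at hsorted
    · obtain ⟨a, b, hab, hne⟩ := Function.not_injective_iff.mp hq
      rw [det_zero_of_column_eq hne fun i => by simp [hab]]
      exact J.zero_mem
  · obtain ⟨a, b, hab, hne⟩ := Function.not_injective_iff.mp hp
    rw [det_zero_of_row_eq hne (by ext; simp [hab])]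
    exact J.zero_mem

theorem Matrix.det_submatrix_mul_eq_zero [IsDomain R] {m o : Type*} {r : ℕ}
    (X : Matrix m (Fin r) R) (Y : Matrix (Fin r) o R) (p : Fin (r + 1) → m)
    (q : Fin (r + 1) → o) : ((X * Y).submatrix p q).det = 0 := by
  by_contra h
  have hrank := rank_of_det_ne_zero h
  rw [← submatrix_mul_equiv X Y p (Equiv.refl _) q] at hrank
  have := (rank_mul_le_left (X.submatrix p id) (Y.submatrix id q)).trans (rank_le_card_width _)
  simp_all

theorem Matrix.det_submatrix_cons_cons {m o : Type*} {r : ℕ} (A : Matrix m o R) (i₀ : m)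
    (j₀ : o) (c : m → R) (hc : ∀ i, A i j₀ = A i₀ j₀ * c i) (p : Fin r → m) (q : Fin r → o) :
    (A.submatrix (Fin.cons i₀ p) (Fin.cons j₀ q)).det
      = A i₀ j₀ * ((A - vecMulVec c (A i₀)).submatrix p q).det := by
  set B := A.submatrix (Fin.cons i₀ p) (Fin.cons j₀ q)
  set d : Fin (r + 1) → R := Fin.cons 0 (c ∘ p)
  have hB : B.det = (of fun i j => B i j - d i * B 0 j).det :=
    det_eq_of_forall_row_eq_smul_add_const d 0 rfl fun i j => by simp [d]
  rw [hB, det_succ_column_zero, Fin.sum_univ_succ, Finset.sum_eq_zero]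
  · have hminor : (of fun i j => B i j - d i * B 0 j).submatrix Fin.succ Fin.succ
        = (A - vecMulVec c (A i₀)).submatrix p q := by
      ext a b
      simp [B, d, vecMulVec_apply]
    simp only [Fin.succAbove_zero, hminor]
    simp [B, d]
  · intro a _
    have : B a.succ 0 - d a.succ * B 0 0 = 0 := by
      simp only [B, d, submatrix_apply, Fin.cons_succ, Fin.cons_zero, Function.comp_apply,
        hc (p a)]
      ring
    simp [this]

end CommRing

namespace IsDiscreteValuationRing

variable {R : Type*} [CommRing R] [IsDomain R] [IsDiscreteValuationRing R]

theorem exists_forall_dvd {ι : Type*} [Finite ι] [Nonempty ι] (f : ι → R) :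
    ∃ i, ∀ j, f i ∣ f j := by
  obtain ⟨i, hi⟩ := Finite.exists_min fun i => addVal R (f i)
  exact ⟨i, fun j => addVal_le_iff_dvd.mp (hi j)⟩

theorem pow_dvd_of_pow_dvd_mul {t x y : R} (ht : Irreducible t) {a b : ℕ}
    (hx : ¬t ^ (a + 1) ∣ x) (h : t ^ (a + b) ∣ x * y) : t ^ b ∣ y := by
  have hx0 : x ≠ 0 := by rintro rfl; exact hx (dvd_zero _)
  obtain ⟨v, u, rfl⟩ := eq_unit_mul_pow_irreducible hx0 ht
  have hv : v ≤ a := by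
    by_contra! hv
    exact hx (Dvd.dvd.mul_left (pow_dvd_pow t hv) _)
  rw [mul_assoc, Units.dvd_mul_left, show a + b = v + (a - v + b) by omega, pow_add,
    mul_dvd_mul_iff_left (pow_ne_zero _ ht.ne_zero)] at h
  exact (pow_dvd_pow t (by omega)).trans h

theorem exists_pow_dvd_sub_mul_of_pow_dvd_minors {t : R} (ht : Irreducible t) (n : ℕ)
    {m o : Type*} [Finite m] [Finite o] (r : ℕ) (A : Matrix m o R)
    (hA : ∀ (p : Fin (r + 1) → m) (q : Fin (r + 1) → o),
      t ^ ((r + 1) * n + 1) ∣ (A.submatrix p q).det) :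
    ∃ (X : Matrix m (Fin r) R) (Y : Matrix (Fin r) o R),
      ∀ i j, t ^ (n + 1) ∣ A i j - (X * Y) i j := by
  induction r generalizing A with
  | zero => exact ⟨0, 0, fun i j => by simpa [det_unique] using hA (fun _ => i) (fun _ => j)⟩
  | succ r ih =>
    by_cases hsmall : ∀ i j, t ^ (n + 1) ∣ A i j
    · exact ⟨0, 0, by simpa using hsmall⟩
    push Not at hsmall
    obtain ⟨i₁, j₁, hij₁⟩ := hsmall
    have : Nonempty (m × o) := ⟨(i₁, j₁)⟩
    obtain ⟨⟨i₀, j₀⟩, hpiv⟩ := exists_forall_dvd fun x : m × o => A x.1 x.2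
    have hpiv_small : ¬t ^ (n + 1) ∣ A i₀ j₀ := fun h => hij₁ (h.trans (hpiv (i₁, j₁)))
    choose c hc using fun i => hpiv (i, j₀)
    obtain ⟨X, Y, hXY⟩ := ih (A - vecMulVec c (A i₀)) fun p q => by
      refine pow_dvd_of_pow_dvd_mul ht hpiv_small ?_
      rw [← det_submatrix_cons_cons A i₀ j₀ c hc]
      convert hA (Fin.cons i₀ p) (Fin.cons j₀ q) using 2
      ring
    refine ⟨of fun i => vecCons (c i) (X i), of (vecCons (A i₀) Y), fun i j => ?_⟩
    convert hXY i j using 1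
    simp only [mul_apply, Fin.sum_univ_succ, of_apply, Matrix.sub_apply, vecMulVec_apply, sub_sub]
    rfl

end IsDiscreteValuationRing

theorem determinantal_artin_lower_bound_and_value_general
    (R : Type*) [CommRing R] [IsDomain R] [IsDiscreteValuationRing R]
    (t : R) (ht : maximalIdeal R = Ideal.span {t})
    (k l r : ℕ) (hkl : k ≤ l) (hr : 1 ≤ r) (hrk : r ≤ k)
    (n : ℕ) (hn : 1 ≤ n) :
    (∃ A : Matrix (Fin k) (Fin l) R,
      (∀ (rows : Fin r → Fin k) (cols : Fin r → Fin l), StrictMono rows → StrictMono cols →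
        (A.submatrix rows cols).det ∈ Ideal.span {t} ^ (r * n - r)) ∧
      ∀ B : Matrix (Fin k) (Fin l) R, (∀ i j, A i j - B i j ∈ Ideal.span {t} ^ n) →
        ∃ (rows : Fin r → Fin k) (cols : Fin r → Fin l),
          StrictMono rows ∧ StrictMono cols ∧ (B.submatrix rows cols).det ≠ 0) ∧
    IsLeast {β : ℕ | ∀ A : Matrix (Fin k) (Fin l) R,
      (∀ (rows : Fin r → Fin k) (cols : Fin r → Fin l), StrictMono rows → StrictMono cols →
        (A.submatrix rows cols).det ∈ Ideal.span {t} ^ β) →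
      ∃ B : Matrix (Fin k) (Fin l) R,
        (∀ (rows : Fin r → Fin k) (cols : Fin r → Fin l), StrictMono rows → StrictMono cols →
          (B.submatrix rows cols).det = 0) ∧
        ∀ i j, A i j - B i j ∈ Ideal.span {t} ^ n} (r * n - r + 1) := by
  obtain ⟨N, rfl⟩ : ∃ N, n = N + 1 := ⟨n - 1, by omega⟩
  obtain ⟨s, rfl⟩ : ∃ s, r = s + 1 := ⟨r - 1, by omega⟩
  have hirr : Irreducible t := (IsDiscreteValuationRing.irreducible_iff_uniformizer t).mpr ht
  have hexp : (s + 1) * (N + 1) - (s + 1) = (s + 1) * N := by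
    rw [Nat.mul_succ, Nat.add_sub_cancel]
  simp only [Ideal.span_singleton_pow, Ideal.mem_span_singleton, hexp]
  obtain ⟨A₀, hA₀, hcongr⟩ :=
    exists_pow_dvd_minors_and_minor_ne_zero_of_congr hirr.ne_zero hirr.not_isUnit hrk hkl N
  refine ⟨⟨A₀, fun p q _ _ => hA₀ p q, hcongr⟩, fun A hA => ?_, fun β hβ => ?_⟩
  · obtain ⟨X, Y, hXY⟩ := IsDiscreteValuationRing.exists_pow_dvd_sub_mul_of_pow_dvd_minors hirr N
      s A fun p q => Ideal.mem_span_singleton.mp <| det_submatrix_mem_of_strictMono A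
        (fun p q hp hq => Ideal.mem_span_singleton.mpr (hA p q hp hq)) p q
    exact ⟨X * Y, fun p q _ _ => det_submatrix_mul_eq_zero X Y p q, hXY⟩
  · by_contra! hβ_lt
    obtain ⟨B, hB, hA₀B⟩ := hβ A₀ fun p q _ _ => (pow_dvd_pow t (by omega)).trans (hA₀ p q)
    obtain ⟨p, q, hp, hq, hdet⟩ := hcongr B hA₀B
    exact hdet (hB p q hp hq)

/-- **Theorem (determinantal ideals over a DVR, lower bound and exact value).** Let `(R, (t))`
be a discrete valuation ring with uniformizer `t`, let `k ≤ l` and `1 ≤ r ≤ k`, and let `n ≥ 1`.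
Then there is a `k × l` matrix `A` over `R` all of whose `r × r` minors lie in `(t)^(rn − r)`
such that every matrix `B` congruent to `A` modulo `(t)ⁿ` entrywise has a nonzero `r × r`
minor.  Consequently `β_n(I_r) = rn − r + 1`: the number `rn − r + 1` is the least `β` such
that every `A` whose `r × r` minors lie in `(t)^β` is entrywise congruent modulo `(t)ⁿ` to a
matrix whose `r × r` minors all vanish. -/
theorem determinantal_artin_lower_bound_and_value
    (R : Type*) [CommRing R] [IsDomain R] [IsDiscreteValuationRing R]
    (t : R) (ht0 : t ≠ 0) (ht : maximalIdeal R = Ideal.span {t})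
    (k l r : ℕ) (hk : 0 < k) (hkl : k ≤ l) (hr : 1 ≤ r) (hrk : r ≤ k)
    (n : ℕ) (hn : 1 ≤ n) :
    (∃ A : Matrix (Fin k) (Fin l) R,
      (∀ (rows : Fin r → Fin k) (cols : Fin r → Fin l), StrictMono rows → StrictMono cols →
        (A.submatrix rows cols).det ∈ Ideal.span {t} ^ (r * n - r)) ∧
      ∀ B : Matrix (Fin k) (Fin l) R, (∀ i j, A i j - B i j ∈ Ideal.span {t} ^ n) →
        ∃ (rows : Fin r → Fin k) (cols : Fin r → Fin l),
          StrictMono rows ∧ StrictMono cols ∧ (B.submatrix rows cols).det ≠ 0) ∧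
    IsLeast {β : ℕ | ∀ A : Matrix (Fin k) (Fin l) R,
      (∀ (rows : Fin r → Fin k) (cols : Fin r → Fin l), StrictMono rows → StrictMono cols →
        (A.submatrix rows cols).det ∈ Ideal.span {t} ^ β) →
      ∃ B : Matrix (Fin k) (Fin l) R,
        (∀ (rows : Fin r → Fin k) (cols : Fin r → Fin l), StrictMono rows → StrictMono cols →
          (B.submatrix rows cols).det = 0) ∧
        ∀ i j, A i j - B i j ∈ Ideal.span {t} ^ n} (r * n - r + 1) :=
  determinantal_artin_lower_bound_and_value_general R t ht k l r hkl hr hrk n hn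
end
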